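/- arXiv:2207.01410 — 2 statements merged into one kernel-verified Lean document; each statement's English description precedes it below -/
import Mathlib

section
/- Let C be an F_{q^m}-linear code of length n whose minimum rank distance is at least n' - k + 1, and suppose all codewords vanish on the last n - n' coordinates. Given a received word x = c_1 + e_1 with c_1 ∈ C and ||e_1|| ≤ t := ⌊(n'-k+ε)/2⌋, where ε ≤ min(n-n', n'-k) elements of an F_q-basis of Supp(e_1) are known (support erasures contained in the support of every candidate error, coming from the last n-n' coordinates), then c_1 is the unique codeword at rank distance ≤ t from x subject to the error support containing the ε known erasure elements. Equivalently: if x = c_2 + e_2 with c_2 ∈ C, ||e_2|| ≤ t, and both Supp(e_1), Supp(e_2) contain a common fixed ε-dimensional F_q-subspace, then c_1 = c_2. -/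
/-- Unique decoding of a code of minimum rank distance `n'-k+1` vanishing on the last
`n - n'` coordinates, with `ε` known support erasures: any two decodings whose error
supports contain a common fixed `ε`-dimensional subspace and have rank weight at most
`t = ⌊(n'-k+ε)/2⌋` coincide. -/
theorem stmt6 (Fq K : Type) [Field Fq] [Field K] [Algebra Fq K]
    (n n' k ε : ℕ) (hk : k ≤ n') (hn' : n' ≤ n) (hε1 : 1 ≤ ε)
    (hε2 : ε ≤ n - n') (hε3 : ε ≤ n' - k)
    (C : Submodule K (Fin n → K))
    (hmin : ∀ c ∈ C, c ≠ 0 →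
      n' - k + 1 ≤ Module.finrank Fq (Submodule.span Fq (Set.range c)))
    (hvanish : ∀ c ∈ C, ∀ j : Fin n, n' ≤ (j : ℕ) → c j = 0)
    (c₁ c₂ : Fin n → K) (hc₁ : c₁ ∈ C) (hc₂ : c₂ ∈ C)
    (e₁ e₂ : Fin n → K)
    (he₁ : Module.finrank Fq (Submodule.span Fq (Set.range e₁)) ≤ (n' - k + ε) / 2)
    (he₂ : Module.finrank Fq (Submodule.span Fq (Set.range e₂)) ≤ (n' - k + ε) / 2)
    (E : Submodule Fq K) (hE : Module.finrank Fq E = ε)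
    (hE1 : E ≤ Submodule.span Fq (Set.range e₁))
    (hE2 : E ≤ Submodule.span Fq (Set.range e₂))
    (hx : c₁ + e₁ = c₂ + e₂) :
    c₁ = c₂ := by
  by_contra hne
  set S₁ := Submodule.span Fq (Set.range e₁)
  set S₂ := Submodule.span Fq (Set.range e₂)
  have hfin1 : FiniteDimensional Fq S₁ :=
    FiniteDimensional.span_of_finite Fq (Set.finite_range e₁)
  have hfin2 : FiniteDimensional Fq S₂ :=
    FiniteDimensional.span_of_finite Fq (Set.finite_range e₂)
  have hsum : Module.finrank Fq ↥(S₁ ⊔ S₂) + Module.finrank Fq ↥(S₁ ⊓ S₂)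
      = Module.finrank Fq S₁ + Module.finrank Fq S₂ :=
    Submodule.finrank_sup_add_finrank_inf_eq S₁ S₂
  have hEle : E ≤ S₁ ⊓ S₂ := le_inf hE1 hE2
  have hfinsup : FiniteDimensional Fq ↥(S₁ ⊔ S₂) := Submodule.finiteDimensional_sup S₁ S₂
  have hεle : ε ≤ Module.finrank Fq ↥(S₁ ⊓ S₂) := by
    rw [← hE]
    exact Submodule.finrank_mono hEle
  set c := c₁ - c₂ with hc
  have hcC : c ∈ C := Submodule.sub_mem C hc₁ hc₂
  have hcne : c ≠ 0 := sub_ne_zero.mpr hne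
  have hcspan : Submodule.span Fq (Set.range c) ≤ S₁ ⊔ S₂ := by
    rw [Submodule.span_le]
    rintro _ ⟨j, rfl⟩
    have : c j = e₂ j - e₁ j := by
      have := congrFun hx j
      simp only [Pi.add_apply] at this
      simp [hc]
      linear_combination this
    rw [this]
    exact Submodule.sub_mem _ (Submodule.mem_sup_right (Submodule.subset_span ⟨j, rfl⟩))
      (Submodule.mem_sup_left (Submodule.subset_span ⟨j, rfl⟩))
  have h1 := hmin c hcC hcne
  have h2 : Module.finrank Fq (Submodule.span Fq (Set.range c))
      ≤ Module.finrank Fq ↥(S₁ ⊔ S₂) := Submodule.finrank_mono hcspan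
  have hhalf : (n' - k + ε) / 2 + (n' - k + ε) / 2 ≤ n' - k + ε := by omega
  omega
end

section
/- Let F be an n-dimensional F_q-vector space and X ⊆ F a fixed j-dimensional subspace. Then for 0 ≤ ℓ, the number of i-dimensional subspaces Y ⊆ F with dim(X ∩ Y) = ℓ equals q^{(i-ℓ)(j-ℓ)} · [n-j choose i-ℓ]_q · [j choose ℓ]_q. -/
/-!
Send `Y` to the pair `(X ⊓ Y, X ⊔ Y)`. Its values are the pairs `U ≤ X ≤ V` with `dim U = ℓ` and
`dim V = j + (i - ℓ)`, i.e. an `ℓ`-dimensional subspace of `X` and an `(i - ℓ)`-dimensional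
subspace of `F ⧸ X`. The fibre over `(U, V)` is the set of complements of `X ⧸ U` in `V ⧸ U`;
these are the graphs of the linear maps from one fixed complement to `X ⧸ U`, so there are
`q ^ ((dim V - j) * (j - ℓ)) = q ^ ((i - ℓ) * (j - ℓ))` of them.
-/

open Module

theorem Nat.card_eq_card_mul_of_forall_card_fiber_eq {α β : Type*} [Finite α] [Finite β]
    (f : α → β) {c : ℕ} (h : ∀ b, Nat.card { a // f a = b } = c) :
    Nat.card α = Nat.card β * c := by
  have := Fintype.ofFinite β
  rw [← Nat.card_congr (Equiv.sigmaFiberEquiv f), Nat.card_sigma,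
    Finset.sum_congr rfl fun b _ => h b, Finset.sum_const, Finset.card_univ, smul_eq_mul,
    Nat.card_eq_fintype_card]

def OrderIso.isComplEquivOfIcc {α β : Type*} [Lattice α] [Lattice β] [BoundedOrder β]
    {u v : α} [Fact (u ≤ v)] (e : β ≃o Set.Icc u v) (b : β) :
    { z : β // IsCompl b z } ≃ { y : α // (e b : α) ⊓ y = u ∧ (e b : α) ⊔ y = v } :=
  (e.toEquiv.subtypeEquiv fun _ => e.isCompl_iff).trans <|
    (Equiv.subtypeEquivRight fun _ => Set.Icc.isCompl_iff).trans <|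
      Equiv.subtypeSubtypeEquivSubtype (p := (· ∈ Set.Icc u v))
        (q := fun y => (e b : α) ⊓ y = u ∧ (e b : α) ⊔ y = v)
        fun hy => ⟨hy.1 ▸ inf_le_right, hy.2 ▸ le_sup_right⟩

namespace Submodule

section Ring

variable {R E : Type*} [Ring R] [AddCommGroup E] [Module R E]

noncomputable def projEquivOfIsCompl {p q : Submodule R E} (h : IsCompl p q) :
    { f : E →ₗ[R] p // ∀ x : p, f x = x } ≃ (q →ₗ[R] p) where
  toFun f := f.1 ∘ₗ q.subtype
  invFun g := ⟨LinearMap.ofIsCompl h LinearMap.id g, fun x => by simp⟩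
  left_inv f := Subtype.ext <| LinearMap.ofIsCompl_eq h (fun x => (f.2 x).symm) fun _ => rfl
  right_inv g := by ext; simp

def quotientOrderIsoIcc {U V : Submodule R E} (h : U ≤ V) :
    Submodule R (V ⧸ U.comap V.subtype) ≃o Set.Icc U V where
  toFun W := ⟨(W.comap (mkQ _)).map V.subtype, Set.mem_Icc.2 ⟨
    calc U = (U.comap V.subtype).map V.subtype := by rw [map_comap_subtype, inf_eq_right.2 h]
      _ ≤ _ := map_mono (le_comap_mkQ _ W), map_subtype_le _ _⟩⟩
  invFun Y := (Y.1.comap V.subtype).map (mkQ _)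
  left_inv W := by
    simp [comap_map_eq_of_injective V.injective_subtype,
      map_comap_eq_of_surjective (mkQ_surjective _)]
  right_inv Y := by
    have hUY : U.comap V.subtype ≤ Y.1.comap V.subtype := comap_mono Y.2.1
    ext1
    dsimp only
    rw [comap_map_mkQ, sup_eq_right.2 hUY, map_comap_subtype, inf_eq_right.2 Y.2.2]
  map_rel_iff' {W W'} := by
    rw [← Subtype.coe_le_coe]
    exact (map_le_map_iff_of_injective V.injective_subtype _ _).trans
      (comap_le_comap_iff_of_surjective (mkQ_surjective _))

end Ring

section DivisionRing

variable {K E : Type*} [DivisionRing K] [AddCommGroup E] [Module K E] [FiniteDimensional K E]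

theorem finrank_comap_mkQ (p : Submodule K E) (W : Submodule K (E ⧸ p)) :
    finrank K (W.comap p.mkQ) = finrank K W + finrank K p := by
  have hp : p ≤ W.comap p.mkQ := le_comap_mkQ p W
  have := (p.mkQ ∘ₗ (W.comap p.mkQ).subtype).finrank_range_add_finrank_ker
  rw [LinearMap.range_comp, range_subtype, map_comap_eq_of_surjective (mkQ_surjective p),
    LinearMap.ker_comp, ker_mkQ, (comapSubtypeEquivOfLe hp).finrank_eq] at this
  exact this.symm

theorem finrank_quotientOrderIsoIcc {U V : Submodule K E} (h : U ≤ V)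
    (W : Submodule K (V ⧸ U.comap V.subtype)) :
    finrank K (quotientOrderIsoIcc h W : Submodule K E) = finrank K W + finrank K U := by
  change finrank K ((W.comap (mkQ _)).map V.subtype) = _
  rw [finrank_map_subtype_eq, finrank_comap_mkQ, (comapSubtypeEquivOfLe h).finrank_eq]

theorem finrank_quotient_comap_subtype_add_finrank {U V : Submodule K E} (h : U ≤ V) :
    finrank K (V ⧸ U.comap V.subtype) + finrank K U = finrank K V := by
  rw [← (comapSubtypeEquivOfLe h).finrank_eq, finrank_quotient_add_finrank]

theorem card_finrank_eq_of_finrank_eq {M N : Type*} [AddCommGroup M] [Module K M]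
    [FiniteDimensional K M] [AddCommGroup N] [Module K N] [FiniteDimensional K N]
    (h : finrank K M = finrank K N) (d : ℕ) :
    Nat.card { W : Submodule K M // finrank K W = d } =
      Nat.card { W : Submodule K N // finrank K W = d } :=
  Nat.card_congr <| (orderIsoMapComap (LinearEquiv.ofFinrankEq M N h)).toEquiv.subtypeEquiv
    fun W => by rw [OrderIso.coe_toEquiv, orderIsoMapComap_apply, LinearEquiv.finrank_map_eq]

theorem card_Icc_finrank_eq {U V : Submodule K E} (h : U ≤ V) (d : ℕ) :
    Nat.card { Y : Set.Icc U V // finrank K (Y : Submodule K E) = d + finrank K U } =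
      Nat.card { W : Submodule K (Fin (finrank K V - finrank K U) → K) // finrank K W = d } := by
  rw [← card_finrank_eq_of_finrank_eq (M := V ⧸ U.comap V.subtype)]
  · exact Nat.card_congr ((quotientOrderIsoIcc h).toEquiv.subtypeEquiv fun W => by
      rw [OrderIso.coe_toEquiv, finrank_quotientOrderIsoIcc, Nat.add_right_cancel_iff]).symm
  · rw [finrank_fin_fun, ← finrank_quotient_comap_subtype_add_finrank h, Nat.add_sub_cancel]

end DivisionRing

section Field

variable {K E : Type*} [Field K] [Fintype K] [AddCommGroup E] [Module K E] [FiniteDimensional K E]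

theorem card_isCompl (p : Submodule K E) :
    Nat.card { q : Submodule K E // IsCompl p q } =
      Fintype.card K ^ ((finrank K E - finrank K p) * finrank K p) := by
  obtain ⟨q, hq⟩ := p.exists_isCompl
  rw [Nat.card_congr (p.isComplEquivProj.trans (projEquivOfIsCompl hq)),
    natCard_eq_pow_finrank (K := K), Nat.card_eq_fintype_card, finrank_linearMap,
    ← finrank_add_eq_of_isCompl hq, Nat.add_sub_cancel_left]

theorem card_inf_eq_and_sup_eq {U A V : Submodule K E} (hUA : U ≤ A) (hAV : A ≤ V) :
    Nat.card { Y : Submodule K E // A ⊓ Y = U ∧ A ⊔ Y = V } =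
      Fintype.card K ^ ((finrank K V - finrank K A) * (finrank K A - finrank K U)) := by
  have : Fact (U ≤ V) := ⟨hUA.trans hAV⟩
  let e := quotientOrderIsoIcc (hUA.trans hAV)
  obtain ⟨b, hb⟩ := e.surjective ⟨A, hUA, hAV⟩
  rw [← show (e b : Submodule K E) = A from congrArg Subtype.val hb]
  rw [← Nat.card_congr (e.isComplEquivOfIcc b), card_isCompl,
    ← finrank_quotient_comap_subtype_add_finrank (hUA.trans hAV), finrank_quotientOrderIsoIcc,
    Nat.add_sub_add_right, Nat.add_sub_cancel]

theorem card_finrank_eq_and_finrank_inf_eq (X : Submodule K E) {i ℓ : ℕ} (hℓi : ℓ ≤ i) :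
    Nat.card { Y : Submodule K E // finrank K Y = i ∧ finrank K ↥(X ⊓ Y) = ℓ } =
      Nat.card { U : Set.Icc ⊥ X // finrank K (U : Submodule K E) = ℓ } *
      Nat.card { V : Set.Icc X ⊤ // finrank K (V : Submodule K E) = (i - ℓ) + finrank K X } *
      Fintype.card K ^ ((i - ℓ) * (finrank K X - ℓ)) := by
  have := Module.finite_of_finite K (M := E)
  let Φ (Y : { Y : Submodule K E // finrank K Y = i ∧ finrank K ↥(X ⊓ Y) = ℓ }) :
      { U : Set.Icc ⊥ X // finrank K (U : Submodule K E) = ℓ } ×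
      { V : Set.Icc X ⊤ // finrank K (V : Submodule K E) = (i - ℓ) + finrank K X } :=
    (⟨⟨X ⊓ Y, bot_le, inf_le_left⟩, Y.2.2⟩, ⟨⟨X ⊔ Y, le_sup_left, le_top⟩, by
      have := finrank_sup_add_finrank_inf_eq X Y.1
      simp only [Y.2.1, Y.2.2] at this ⊢
      omega⟩)
  rw [Nat.card_eq_card_mul_of_forall_card_fiber_eq Φ, Nat.card_prod]
  rintro ⟨⟨U, hU⟩, ⟨V, hV⟩⟩
  have hfiber : { Y // Φ Y = (⟨U, hU⟩, ⟨V, hV⟩) } ≃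
      { Y : Submodule K E // X ⊓ Y = U ∧ X ⊔ Y = V } :=
    (Equiv.subtypeEquivRight fun Y => by simp [Φ, Prod.ext_iff, Subtype.ext_iff]).trans <|
      Equiv.subtypeSubtypeEquivSubtype
        (p := fun Y : Submodule K E => finrank K Y = i ∧ finrank K ↥(X ⊓ Y) = ℓ)
        (q := fun Y : Submodule K E => X ⊓ Y = U ∧ X ⊔ Y = V) fun {Y} hY => by
          have := finrank_sup_add_finrank_inf_eq X Y
          rw [hY.1, hY.2] at this
          rw [hY.1]
          omega
  rw [Nat.card_congr hfiber, card_inf_eq_and_sup_eq U.2.2 V.2.1, hU, hV, Nat.add_sub_cancel]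

end Field

end Submodule

theorem stmt10_general (Fq F : Type) [Field Fq] [Fintype Fq] [AddCommGroup F] [Module Fq F]
    [FiniteDimensional Fq F] (n i j ℓ : ℕ) (hn : Module.finrank Fq F = n)
    (hℓi : ℓ ≤ i)
    (X : Submodule Fq F) (hX : Module.finrank Fq X = j) :
    Nat.card {Y : Submodule Fq F //
        Module.finrank Fq Y = i ∧ Module.finrank Fq ↥(X ⊓ Y) = ℓ}
      = Fintype.card Fq ^ ((i - ℓ) * (j - ℓ)) *
        Nat.card {W : Submodule Fq (Fin (n - j) → Fq) // Module.finrank Fq W = i - ℓ} *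
        Nat.card {W : Submodule Fq (Fin j → Fq) // Module.finrank Fq W = ℓ} := by
  have hsub := Submodule.card_Icc_finrank_eq (bot_le : ⊥ ≤ X) ℓ
  have hsuper := Submodule.card_Icc_finrank_eq (le_top : X ≤ ⊤) (i - ℓ)
  rw [finrank_bot, add_zero, Nat.sub_zero, hX] at hsub
  rw [finrank_top, hn, hX] at hsuper
  rw [Submodule.card_finrank_eq_and_finrank_inf_eq X hℓi, hX, hsub, hsuper]
  ring

/-- In an `n`-dimensional `F_q`-space `F` with a fixed `j`-dimensional subspace `X`,
the number of `i`-dimensional subspaces `Y` with `dim (X ∩ Y) = ℓ` is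
`q^{(i-ℓ)(j-ℓ)} · [n-j choose i-ℓ]_q · [j choose ℓ]_q`. -/
theorem stmt10 (Fq F : Type) [Field Fq] [Fintype Fq] [AddCommGroup F] [Module Fq F]
    [FiniteDimensional Fq F] (n i j ℓ : ℕ) (hn : Module.finrank Fq F = n)
    (hℓi : ℓ ≤ i) (hℓj : ℓ ≤ j)
    (X : Submodule Fq F) (hX : Module.finrank Fq X = j) :
    Nat.card {Y : Submodule Fq F //
        Module.finrank Fq Y = i ∧ Module.finrank Fq ↥(X ⊓ Y) = ℓ}
      = Fintype.card Fq ^ ((i - ℓ) * (j - ℓ)) *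
        Nat.card {W : Submodule Fq (Fin (n - j) → Fq) // Module.finrank Fq W = i - ℓ} *
        Nat.card {W : Submodule Fq (Fin j → Fq) // Module.finrank Fq W = ℓ} :=
  stmt10_general Fq F n i j ℓ hn hℓi X hX
end
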